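/- arXiv:1105.5539 — 7 statements merged into one kernel-verified Lean document; each statement's English description precedes it below -/
import Mathlib

section
/- Let P be a monoid which is a submonoid of a group G. For p₁, q₁, …, p_m, q_m ∈ P with p₁⁻¹q₁ ⋯ p_m⁻¹q_m = e in G, the product of operators V_{p₁}* V_{q₁} ⋯ V_{p_m}* V_{q_m} on ℓ²(P) equals the orthogonal projection E_X onto ℓ²(X), where X = q_m⁻¹ p_m ⋯ q₁⁻¹ p₁ P (compositions of image and preimage maps of left multiplications applied to P). -/
/-!
On basis vectors `V_p* V_q` sends `ε_x` to `ε_y` when `p y = q x`, and to `0` when `q x ∉ p P`.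
Read in `G`, it is the partial translation by `p⁻¹ q` with domain `q⁻¹ p P`, and a product of
partial translations is the partial translation by the product of the group elements, with the
composite domain. For the word in the theorem this is the translation by `e` with domain `X`:
it fixes `ε_x` for `x ∈ X` and kills the other basis vectors, exactly as `E_X` does.
-/

open scoped InnerProductSpace lp
open ContinuousLinearMap

section Basis

variable {𝕜 ι κ : Type*} [RCLike 𝕜] [DecidableEq ι] [DecidableEq κ]

theorem lp.inner_single_one_left (i : ι) (f : ℓ²(ι, 𝕜)) :
    ⟪lp.single 2 i (1 : 𝕜), f⟫_𝕜 = f i := by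
  simp [lp.inner_single_left]

theorem ContinuousLinearMap.ext_lp_single {F : Type*} [NormedAddCommGroup F] [NormedSpace 𝕜 F]
    {S T : ℓ²(ι, 𝕜) →L[𝕜] F} (h : ∀ i, S (lp.single 2 i 1) = T (lp.single 2 i 1)) : S = T := by
  ext f
  have hsingle : ∀ i, lp.single 2 i (f i) = f i • (lp.single 2 i 1 : ℓ²(ι, 𝕜)) := fun i => by
    rw [← lp.single_smul, smul_eq_mul, mul_one]
  have hf := lp.hasSum_single (E := fun _ : ι => 𝕜) (p := 2) ENNReal.ofNat_ne_top f
  refine (hf.mapL S).unique ?_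
  simpa only [hsingle, map_smul, h] using hf.mapL T

variable {f : ι → κ} {V : ℓ²(ι, 𝕜) →L[𝕜] ℓ²(κ, 𝕜)}

theorem ContinuousLinearMap.adjoint_apply_single_one_apply
    (hV : ∀ i, V (lp.single 2 i 1) = lp.single 2 (f i) 1) (k : κ) (i : ι) :
    adjoint V (lp.single 2 k 1) i = if f i = k then 1 else 0 := by
  rw [← lp.inner_single_one_left, adjoint_inner_right, hV, lp.inner_single_one_left,
    lp.single_apply, Pi.single_apply]

theorem ContinuousLinearMap.adjoint_apply_single_one_of_injective (hf : f.Injective)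
    (hV : ∀ i, V (lp.single 2 i 1) = lp.single 2 (f i) 1) (i : ι) :
    adjoint V (lp.single 2 (f i) 1) = lp.single 2 i 1 := by
  ext j
  simp only [adjoint_apply_single_one_apply hV, lp.single_apply, Pi.single_apply, hf.eq_iff]

theorem ContinuousLinearMap.adjoint_apply_single_one_of_notMem_range
    (hV : ∀ i, V (lp.single 2 i 1) = lp.single 2 (f i) 1) {k : κ} (hk : k ∉ Set.range f) :
    adjoint V (lp.single 2 k 1) = 0 := by
  ext i
  rw [adjoint_apply_single_one_apply hV, if_neg fun h => hk ⟨i, h⟩, lp.coeFn_zero, Pi.zero_apply]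

end Basis

section PartialTranslation

variable {𝕜 P G : Type*} [RCLike 𝕜] [Monoid P] [Group G] [DecidableEq P]

def IsPartialTranslation (φ : P →* G) (g : G) (D : Set P) (T : ℓ²(P, 𝕜) →L[𝕜] ℓ²(P, 𝕜)) :
    Prop :=
  (∀ x ∈ D, ∃ y, φ y = g * φ x ∧ T (lp.single 2 x 1) = lp.single 2 y 1) ∧
    ∀ x ∉ D, T (lp.single 2 x 1) = 0

variable {φ : P →* G}

theorem isPartialTranslation_one : IsPartialTranslation φ 1 Set.univ (1 : ℓ²(P, 𝕜) →L[𝕜] _) :=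
  ⟨fun x _ => ⟨x, (one_mul _).symm, rfl⟩, fun x hx => absurd (Set.mem_univ x) hx⟩

theorem IsPartialTranslation.mul_adjoint_mul (hφ : Function.Injective φ) {g : G} {S : Set P}
    {A Vp Vq : ℓ²(P, 𝕜) →L[𝕜] ℓ²(P, 𝕜)} (hA : IsPartialTranslation φ g S A) {p q : P}
    (hVp : ∀ x, Vp (lp.single 2 x 1) = lp.single 2 (p * x) 1)
    (hVq : ∀ x, Vq (lp.single 2 x 1) = lp.single 2 (q * x) 1) :
    IsPartialTranslation φ (g * ((φ p)⁻¹ * φ q)) ((q * ·) ⁻¹' ((p * ·) '' S))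
      (A * (adjoint Vp * Vq)) := by
  have : IsLeftCancelMul P := hφ.isLeftCancelMul φ (map_mul φ)
  have hstep : ∀ x y, p * y = q * x →
      (adjoint Vp * Vq) (lp.single 2 x 1) = lp.single 2 y 1 := fun x y h => by
    rw [mul_apply_eq_comp, hVq, ← h,
      adjoint_apply_single_one_of_injective (mul_right_injective p) hVp]
  refine ⟨?_, fun x hx => ?_⟩
  · rintro x ⟨y, hyS, hy : p * y = q * x⟩
    obtain ⟨z, hz, hAy⟩ := hA.1 y hyS
    refine ⟨z, ?_, by rw [mul_apply_eq_comp, hstep x y hy, hAy]⟩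
    have : φ p * φ y = φ q * φ x := by rw [← map_mul, ← map_mul, hy]
    rw [hz, eq_inv_mul_of_mul_eq this, mul_assoc, mul_assoc]
  · by_cases hpq : ∃ y, p * y = q * x
    · obtain ⟨y, hy⟩ := hpq
      rw [mul_apply_eq_comp, hstep x y hy, hA.2 y fun hyS => hx ⟨y, hyS, hy⟩]
    · rw [mul_apply_eq_comp, mul_apply_eq_comp, hVq,
        adjoint_apply_single_one_of_notMem_range hVp (fun ⟨y, hy⟩ => hpq ⟨y, hy⟩), map_zero]

theorem isPartialTranslation_list_prod (hφ : Function.Injective φ)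
    {V : P → ℓ²(P, 𝕜) →L[𝕜] ℓ²(P, 𝕜)}
    (hV : ∀ r x, V r (lp.single 2 x 1) = lp.single 2 (r * x) 1)
    {α : Type*} (p q : α → P) (L : List α) :
    IsPartialTranslation φ (L.map fun i => (φ (p i))⁻¹ * φ (q i)).prod
      (L.foldl (fun S i => (q i * ·) ⁻¹' ((p i * ·) '' S)) Set.univ)
      (L.map fun i => adjoint (V (p i)) * V (q i)).prod := by
  induction L using List.reverseRecOn with
  | nil => exact isPartialTranslation_one
  | append_singleton L i ih =>
    simpa only [List.map_append, List.prod_append, List.map_singleton, List.prod_singleton,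
      List.foldl_append, List.foldl_cons, List.foldl_nil] using
      ih.mul_adjoint_mul hφ (hV (p i)) (hV (q i))

end PartialTranslation

/-- Let `P` be a submonoid of a group `G` (given by an injective monoid
homomorphism `φ : P →* G`). If `p₁, q₁, …, p_m, q_m ∈ P` satisfy
`p₁⁻¹q₁ ⋯ p_m⁻¹q_m = e` in `G`, then `V_{p₁}* V_{q₁} ⋯ V_{p_m}* V_{q_m} = E_X` on `ℓ²(P)`,
where `X = q_m⁻¹ p_m ⋯ q₁⁻¹ p₁ P` (compositions of image and preimage maps of left
multiplications applied to `P`). -/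
theorem stmt_5 {P G : Type*} [Monoid P] [Group G] [DecidableEq P]
    (φ : P →* G) (hφ : Function.Injective φ)
    (V : P → (lp (fun _ : P => ℂ) 2 →L[ℂ] lp (fun _ : P => ℂ) 2))
    (hV : ∀ r x : P, V r (lp.single 2 x (1 : ℂ)) = lp.single 2 (r * x) (1 : ℂ))
    (m : ℕ) (p q : Fin m → P)
    (hword : (((List.finRange m).map fun i => (φ (p i))⁻¹ * φ (q i)).prod = (1 : G)))
    (X : Set P)
    (hX : X = List.foldl
      (fun S i => (fun z => q i * z) ⁻¹' ((fun z => p i * z) '' S))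
      (Set.univ : Set P) (List.finRange m))
    (E : lp (fun _ : P => ℂ) 2 →L[ℂ] lp (fun _ : P => ℂ) 2)
    (hE₁ : ∀ x ∈ X, E (lp.single 2 x (1 : ℂ)) = lp.single 2 x (1 : ℂ))
    (hE₂ : ∀ x ∉ X, E (lp.single 2 x (1 : ℂ)) = 0) :
    (((List.finRange m).map fun i =>
      (ContinuousLinearMap.adjoint (V (p i))) * (V (q i))).prod) = E := by
  have hW := isPartialTranslation_list_prod hφ hV p q (List.finRange m)
  rw [hword, ← hX] at hW
  refine ext_lp_single fun x => ?_
  by_cases hx : x ∈ X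
  · obtain ⟨y, hy, hWx⟩ := hW.1 x hx
    rw [hWx, hφ (hy.trans (one_mul _)), hE₁ x hx]
  · rw [hW.2 x hx, hE₂ x hx]
end

section
/- Let P be a left cancellative monoid. For all p₁, q₁, …, p_m, q_m ∈ P and any subset X ⊆ P, one has q₁⁻¹ p₁ ⋯ q_m⁻¹ p_m p_m⁻¹ q_m ⋯ p₁⁻¹ q₁ X = (q₁⁻¹ p₁ ⋯ q_m⁻¹ p_m P) ∩ X, where juxtaposition denotes alternately taking images pY = {py : y ∈ Y} and preimages q⁻¹Y = {z ∈ P : qz ∈ Y} under left multiplication. -/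
/-!
The innermost pair collapses: `p (T ∩ p⁻¹ q X) = p T ∩ q X`, and `q⁻¹ (p T ∩ q X) = q⁻¹ p T ∩ X`
because left multiplication by `q` is injective. Induction on the number of pairs, with `T` the
remaining outer word applied to `P`, peels the pairs off one at a time.
-/

section LeftCancel

variable {P : Type*} [Mul P] [IsLeftCancelMul P]

theorem preimage_mul_left_image_inter_preimage_image (a b : P) (T X : Set P) :
    (b * ·) ⁻¹' ((a * ·) '' (T ∩ (a * ·) ⁻¹' ((b * ·) '' X))) = (b * ·) ⁻¹' ((a * ·) '' T) ∩ X := by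
  rw [Set.image_inter_preimage, Set.preimage_inter, (mul_right_injective b).preimage_image]

theorem foldr_preimage_image_foldl_preimage_image {ι : Type*} (p q : ι → P) (l : List ι)
    (X : Set P) :
    l.foldr (fun i S => (q i * ·) ⁻¹' ((p i * ·) '' S))
        (l.foldl (fun S i => (p i * ·) ⁻¹' ((q i * ·) '' S)) X)
      = l.foldr (fun i S => (q i * ·) ⁻¹' ((p i * ·) '' S)) Set.univ ∩ X := by
  induction l generalizing X with
  | nil => simp
  | cons a l ih =>
    rw [List.foldr_cons, List.foldl_cons, ih, List.foldr_cons]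
    exact preimage_mul_left_image_inter_preimage_image (p a) (q a) _ X

end LeftCancel

/-- In a left cancellative monoid `P`, for all `p₁, q₁, …, p_m, q_m ∈ P` and
`X ⊆ P`:
`q₁⁻¹ p₁ ⋯ q_m⁻¹ p_m p_m⁻¹ q_m ⋯ p₁⁻¹ q₁ X = (q₁⁻¹ p₁ ⋯ q_m⁻¹ p_m P) ∩ X`,
where `pY = {py : y ∈ Y}` and `q⁻¹Y = {z ∈ P : qz ∈ Y}`, applied from right to left. -/
theorem stmt_6 {P : Type*} [Monoid P]
    (hcancel : ∀ p x y : P, p * x = p * y → x = y)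
    (m : ℕ) (p q : Fin m → P) (X : Set P) :
    List.foldl (fun S i => (fun z => q i * z) ⁻¹' ((fun z => p i * z) '' S))
      (List.foldl (fun S i => (fun z => p i * z) ⁻¹' ((fun z => q i * z) '' S))
        X (List.finRange m))
      (List.finRange m).reverse
    = (List.foldl (fun S i => (fun z => q i * z) ⁻¹' ((fun z => p i * z) '' S))
        (Set.univ : Set P) (List.finRange m).reverse) ∩ X := by
  have : IsLeftCancelMul P := ⟨hcancel⟩
  rw [List.foldl_reverse, List.foldl_reverse]
  exact foldr_preimage_image_foldl_preimage_image p q (List.finRange m) X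
end

section
/- Let R be a Dedekind domain and I a nonzero ideal of R. Then there exist nonzero elements a, c ∈ R such that I = {r ∈ R : c·r ∈ a·R}, i.e., I is the preimage of the principal ideal aR under multiplication by c. Equivalently, I = ((c⁻¹a)·R) ∩ R inside the fraction field. -/
/-!
Pick `0 ≠ a ∈ I` and write `aR = IJ`. Since `IJ ≤ J`, in a Dedekind domain there is `c ≠ 0`
with `IJ + cR = J`. If `cr ∈ IJ`, then `rJ = rIJ + rcR ≤ IJ`, and cancelling the invertible
ideal `J` gives `r ∈ I`; conversely `cI ≤ JI = aR`.
-/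

namespace IsDedekindDomain

variable {R : Type*} [CommRing R] [IsDedekindDomain R]

lemma exists_ne_zero_sup_span_eq {I J : Ideal R} (hIJ : I ≤ J) (hI : I ≠ ⊥) :
    ∃ c ≠ 0, I ⊔ Ideal.span {c} = J := by
  obtain ⟨c, hc⟩ := exists_sup_span_eq hIJ hI
  by_cases hc0 : c = 0
  · obtain ⟨a, haI, ha0⟩ := Submodule.exists_mem_ne_zero_of_ne_bot hI
    refine ⟨a, ha0, ?_⟩
    rw [sup_eq_left.mpr ((Ideal.span_singleton_le_iff_mem I).mpr haI), ← hc, hc0,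
      Ideal.span_singleton_eq_bot.mpr rfl, sup_bot_eq]
  · exact ⟨c, hc0, hc⟩

lemma setOf_mul_mem_mul_eq {I J : Ideal R} (hJ : J ≠ ⊥) {c : R}
    (hc : I * J ⊔ Ideal.span {c} = J) : {r : R | c * r ∈ I * J} = (I : Set R) := by
  have hcJ : c ∈ J := hc ▸ Ideal.mem_sup_right (Ideal.mem_span_singleton_self c)
  ext r
  refine ⟨fun hcr => ?_, fun hr => ?_⟩
  · have hrJ : Ideal.span {r} * J ≤ I * J := by
      conv_lhs => rw [← hc, Ideal.mul_sup, Ideal.span_singleton_mul_span_singleton, mul_comm r c]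
      exact sup_le Ideal.mul_le_right ((Ideal.span_singleton_le_iff_mem _).mpr hcr)
    exact Ideal.dvd_span_singleton.mp
      ((mul_dvd_mul_iff_right hJ).mp (Ideal.dvd_iff_le.mpr hrJ))
  · show c * r ∈ I * J
    exact mul_comm r c ▸ Ideal.mul_mem_mul hr hcJ

end IsDedekindDomain

theorem stmt_9_general {R : Type*} [CommRing R] [IsDedekindDomain R]
    (I : Ideal R) (hI : I ≠ ⊥) :
    ∃ a c : R, a ≠ 0 ∧ c ≠ 0 ∧
      (I : Set R) = {r : R | c * r ∈ Ideal.span ({a} : Set R)} := by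
  obtain ⟨a, haI, ha0⟩ := Submodule.exists_mem_ne_zero_of_ne_bot hI
  obtain ⟨J, haIJ⟩ := Ideal.dvd_span_singleton.mpr haI
  have hIJ : I * J ≠ ⊥ := haIJ ▸ (Ideal.span_singleton_eq_bot.not.mpr ha0)
  have hJ : J ≠ ⊥ := right_ne_zero_of_mul hIJ
  obtain ⟨c, hc0, hc⟩ := IsDedekindDomain.exists_ne_zero_sup_span_eq Ideal.mul_le_right hIJ
  exact ⟨a, c, ha0, hc0, by rw [haIJ, IsDedekindDomain.setOf_mul_mem_mul_eq hJ hc]⟩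

/-- In a Dedekind domain `R`, every nonzero ideal `I` is of the form
`I = {r ∈ R : c·r ∈ aR}` for some nonzero `a, c ∈ R`, i.e. `I` is the preimage of the
principal ideal `aR` under multiplication by `c`. -/
theorem stmt_9 {R : Type*} [CommRing R] [IsDomain R] [IsDedekindDomain R]
    (I : Ideal R) (hI : I ≠ ⊥) :
    ∃ a c : R, a ≠ 0 ∧ c ≠ 0 ∧
      (I : Set R) = {r : R | c * r ∈ Ideal.span ({a} : Set R)} :=
  stmt_9_general I hI
end

section
/- Let P be a left cancellative monoid, and suppose there exists a net of unit vectors (ξ_i) in ℓ²(P) with ‖V_p ξ_i − ξ_i‖ → 0 for all p ∈ P. Then for all n ≥ 1 and p₁, q₁, …, p_n, q_n ∈ P, ⟨V_{p₁}* V_{q₁} ⋯ V_{p_n}* V_{q_n} ξ_i, ξ_i⟩ → 1. -/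
/-!
Each `V_p` sends the orthonormal basis `(ε_x)` to the orthonormal family `(ε_{px})` (left
cancellation), so it is an isometry; hence `V_p* V_p = 1` and `V_p* ξ − ξ = V_p* (ξ − V_p ξ)`,
which makes `V_p*` almost fix the `ξ_i` as well. The contractions `T` with `‖T ξ_i − ξ_i‖ → 0`
form a submonoid, because `‖S T ξ − ξ‖ ≤ ‖S ξ − ξ‖ + ‖T ξ − ξ‖` when `‖S‖ ≤ 1`. Finally
`|⟨T ξ_i, ξ_i⟩ − 1| = |⟨T ξ_i − ξ_i, ξ_i⟩| ≤ ‖T ξ_i − ξ_i‖` for unit vectors `ξ_i`.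
-/

open Filter Topology ContinuousLinearMap
open scoped InnerProductSpace lp

section l2

variable {ι 𝕜 : Type*} [RCLike 𝕜] [DecidableEq ι]

theorem lp.orthonormal_single_one : Orthonormal 𝕜 fun i : ι => lp.single 2 i (1 : 𝕜) := by
  convert (default : HilbertBasis ι 𝕜 ℓ²(ι, 𝕜)).orthonormal with i
  exact (default : HilbertBasis ι 𝕜 ℓ²(ι, 𝕜)).repr_symm_single i

theorem lp.ext_continuousLinearMap_single_one {F : Type*} [AddCommMonoid F] [Module 𝕜 F]
    [TopologicalSpace F] [T2Space F] {f g : ℓ²(ι, 𝕜) →L[𝕜] F}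
    (h : ∀ i, f (lp.single 2 i 1) = g (lp.single 2 i 1)) : f = g :=
  lp.ext_continuousLinearMap (by simp) fun i =>
    ContinuousLinearMap.ext_ring (by simpa [lp.singleContinuousLinearMap_apply] using h i)

theorem lp.norm_map_of_orthonormal_single {E : Type*} [NormedAddCommGroup E]
    [InnerProductSpace 𝕜 E] [CompleteSpace E] {T : ℓ²(ι, 𝕜) →L[𝕜] E}
    (hT : Orthonormal 𝕜 fun i => T (lp.single 2 i 1)) (x : ℓ²(ι, 𝕜)) : ‖T x‖ = ‖x‖ := by
  have : T = hT.orthogonalFamily.linearIsometry.toContinuousLinearMap :=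
    lp.ext_continuousLinearMap_single_one fun i => by simp
  rw [this]
  exact LinearIsometry.norm_map _ x

end l2

section NormedSpace

variable {𝕜 E ι : Type*} [RCLike 𝕜] [NormedAddCommGroup E] [NormedSpace 𝕜 E]

theorem ContinuousLinearMap.norm_le_one_of_norm_map {T : E →L[𝕜] E}
    (hT : ∀ x, ‖T x‖ = ‖x‖) : ‖T‖ ≤ 1 :=
  opNorm_le_bound _ zero_le_one fun x => by rw [hT, one_mul]

theorem ContinuousLinearMap.norm_mul_apply_sub_self_le {S T : E →L[𝕜] E}
    (hS : ‖S‖ ≤ 1) (x : E) : ‖(S * T) x - x‖ ≤ ‖S x - x‖ + ‖T x - x‖ :=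
  calc ‖S (T x) - x‖ ≤ ‖S (T x) - S x‖ + ‖S x - x‖ := norm_sub_le_norm_sub_add_norm_sub _ _ _
    _ = ‖S (T x - x)‖ + ‖S x - x‖ := by rw [map_sub]
    _ ≤ ‖T x - x‖ + ‖S x - x‖ := by
      gcongr
      simpa using S.le_of_opNorm_le hS (T x - x)
    _ = ‖S x - x‖ + ‖T x - x‖ := add_comm _ _

def contractionsAlmostFixing (l : Filter ι) (ξ : ι → E) : Submonoid (E →L[𝕜] E) where
  carrier := {T | ‖T‖ ≤ 1 ∧ Tendsto (fun i => ‖T (ξ i) - ξ i‖) l (𝓝 0)}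
  one_mem' := ⟨norm_id_le, by simpa using tendsto_const_nhds⟩
  mul_mem' := by
    rintro S T ⟨hS, hSξ⟩ ⟨hT, hTξ⟩
    refine ⟨(norm_mul_le S T).trans (mul_le_one₀ hS (norm_nonneg T) hT), ?_⟩
    exact squeeze_zero (fun _ => norm_nonneg _)
      (fun i => norm_mul_apply_sub_self_le hS (ξ i)) (by simpa using hSξ.add hTξ)

theorem mem_contractionsAlmostFixing_of_norm_map {l : Filter ι} {ξ : ι → E} {T : E →L[𝕜] E}
    (hT : ∀ x, ‖T x‖ = ‖x‖) (hTξ : Tendsto (fun i => ‖T (ξ i) - ξ i‖) l (𝓝 0)) :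
    T ∈ contractionsAlmostFixing l ξ :=
  ⟨norm_le_one_of_norm_map hT, hTξ⟩

end NormedSpace

section InnerProductSpace

variable {𝕜 E ι : Type*} [RCLike 𝕜] [NormedAddCommGroup E] [InnerProductSpace 𝕜 E]

theorem ContinuousLinearMap.norm_adjoint_apply_sub_self_le [CompleteSpace E] {T : E →L[𝕜] E}
    (hT : ∀ x, ‖T x‖ = ‖x‖) (x : E) : ‖adjoint T x - x‖ ≤ ‖T x - x‖ := by
  have hTT : adjoint T ∘L T = 1 := T.norm_map_iff_adjoint_comp_self.mp hT
  have hT1 : ‖adjoint T‖ ≤ 1 :=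
    (LinearIsometryEquiv.norm_map _ T).trans_le (norm_le_one_of_norm_map hT)
  calc ‖adjoint T x - x‖ = ‖adjoint T (x - T x)‖ := by
        rw [map_sub, ← comp_apply, hTT, one_apply_eq_self]
    _ ≤ ‖x - T x‖ := by simpa using (adjoint T).le_of_opNorm_le hT1 (x - T x)
    _ = ‖T x - x‖ := norm_sub_rev _ _

theorem adjoint_mem_contractionsAlmostFixing [CompleteSpace E] {l : Filter ι} {ξ : ι → E}
    {T : E →L[𝕜] E} (hT : ∀ x, ‖T x‖ = ‖x‖)
    (hTξ : Tendsto (fun i => ‖T (ξ i) - ξ i‖) l (𝓝 0)) :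
    adjoint T ∈ contractionsAlmostFixing l ξ :=
  ⟨(LinearIsometryEquiv.norm_map _ T).trans_le (norm_le_one_of_norm_map hT),
    squeeze_zero (fun _ => norm_nonneg _) (fun i => norm_adjoint_apply_sub_self_le hT (ξ i)) hTξ⟩

theorem tendsto_inner_apply_self_of_tendsto_norm_sub {l : Filter ι} {ξ : ι → E}
    (hξ : ∀ i, ‖ξ i‖ = 1) {T : E →L[𝕜] E} (hT : Tendsto (fun i => ‖T (ξ i) - ξ i‖) l (𝓝 0)) :
    Tendsto (fun i => ⟪T (ξ i), ξ i⟫_𝕜) l (𝓝 1) := by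
  rw [tendsto_iff_norm_sub_tendsto_zero]
  refine squeeze_zero (fun _ => norm_nonneg _) (fun i => ?_) hT
  calc ‖⟪T (ξ i), ξ i⟫_𝕜 - 1‖ = ‖⟪T (ξ i) - ξ i, ξ i⟫_𝕜‖ := by
        rw [inner_sub_left, inner_self_eq_norm_sq_to_K, hξ i]
        norm_num
    _ ≤ ‖T (ξ i) - ξ i‖ := by
        simpa [hξ i] using norm_inner_le_norm (𝕜 := 𝕜) (T (ξ i) - ξ i) (ξ i)

end InnerProductSpace

theorem stmt_14_general {P : Type*} [Monoid P] [DecidableEq P]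
    (hcancel : ∀ p x y : P, p * x = p * y → x = y)
    (V : P → (lp (fun _ : P => ℂ) 2 →L[ℂ] lp (fun _ : P => ℂ) 2))
    (hV : ∀ p x : P, V p (lp.single 2 x (1 : ℂ)) = lp.single 2 (p * x) (1 : ℂ))
    (ι : Type*) (l : Filter ι) (ξ : ι → lp (fun _ : P => ℂ) 2)
    (hξ : ∀ i, ‖ξ i‖ = 1)
    (hconv : ∀ p : P, Filter.Tendsto (fun i => ‖V p (ξ i) - ξ i‖) l (nhds 0)) :
    ∀ (n : ℕ), 1 ≤ n → ∀ p q : Fin n → P,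
      Filter.Tendsto
        (fun i => (inner ℂ
          ((((List.finRange n).map fun j =>
            (ContinuousLinearMap.adjoint (V (p j))) * (V (q j))).prod) (ξ i))
          (ξ i) : ℂ))
        l (nhds 1) := by
  intro n _ p q
  have hVisom (r : P) : ∀ x, ‖V r x‖ = ‖x‖ :=
    lp.norm_map_of_orthonormal_single <| by
      simpa only [Function.comp_def, hV] using lp.orthonormal_single_one.comp _ (hcancel r)
  have hfactor (j : Fin n) : adjoint (V (p j)) * V (q j) ∈ contractionsAlmostFixing l ξ :=
    mul_mem (adjoint_mem_contractionsAlmostFixing (hVisom (p j)) (hconv (p j)))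
      (mem_contractionsAlmostFixing_of_norm_map (hVisom (q j)) (hconv (q j)))
  have hprod : ((List.finRange n).map fun j => adjoint (V (p j)) * V (q j)).prod ∈
      contractionsAlmostFixing l ξ :=
    Submonoid.list_prod_mem _ (by simpa using hfactor)
  exact tendsto_inner_apply_self_of_tendsto_norm_sub hξ hprod.2

/-- Let `P` be a left cancellative monoid and `(ξ_i)` a net of unit vectors
in `ℓ²(P)` with `‖V_p ξ_i − ξ_i‖ → 0` for all `p ∈ P`. Then for all `n ≥ 1` and
`p₁, q₁, …, p_n, q_n ∈ P`, one has `⟨V_{p₁}* V_{q₁} ⋯ V_{p_n}* V_{q_n} ξ_i, ξ_i⟩ → 1`. -/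
theorem stmt_14 {P : Type*} [Monoid P] [DecidableEq P]
    (hcancel : ∀ p x y : P, p * x = p * y → x = y)
    (V : P → (lp (fun _ : P => ℂ) 2 →L[ℂ] lp (fun _ : P => ℂ) 2))
    (hV : ∀ p x : P, V p (lp.single 2 x (1 : ℂ)) = lp.single 2 (p * x) (1 : ℂ))
    (ι : Type*) (l : Filter ι) (hl : l.NeBot) (ξ : ι → lp (fun _ : P => ℂ) 2)
    (hξ : ∀ i, ‖ξ i‖ = 1)
    (hconv : ∀ p : P, Filter.Tendsto (fun i => ‖V p (ξ i) - ξ i‖) l (nhds 0)) :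
    ∀ (n : ℕ), 1 ≤ n → ∀ p q : Fin n → P,
      Filter.Tendsto
        (fun i => (inner ℂ
          ((((List.finRange n).map fun j =>
            (ContinuousLinearMap.adjoint (V (p j))) * (V (q j))).prod) (ξ i))
          (ξ i) : ℂ))
        l (nhds 1) :=
  stmt_14_general hcancel V hV ι l ξ hξ hconv
end

section
/- Let P be a cancellative monoid and suppose there exists a net of unit vectors (ξ_i) in finitely supported functions on P such that ⟨V_{p₁} V_{p₁}* V_{p₂} V_{p₂}* ξ_i, ξ_i⟩ → 1 for all p₁, p₂ ∈ P. Then P is left reversible: for all p₁, p₂ ∈ P, p₁P ∩ p₂P ≠ ∅. -/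
/-!
If `p₁P ∩ p₂P = ∅`, then `V_{p₂}` maps `ℓ²(P)` into `ℓ²(p₂P)`, on which `V_{p₁}*`, given by
`(V_{p₁}* f)(x) = f(p₁x)`, vanishes. Hence `V_{p₁} V_{p₁}* V_{p₂} V_{p₂}* = 0`, and the
inner products in question are all `0`, so they cannot tend to `1`.
-/

namespace lp

variable {𝕜 α β : Type*} [RCLike 𝕜] [DecidableEq α]

theorem map_apply_eq_zero_of_single_one (T : lp (fun _ : α => 𝕜) 2 →L[𝕜] lp (fun _ : β => 𝕜) 2)
    {y : β} (hT : ∀ x, T (lp.single 2 x 1) y = 0) (f : lp (fun _ : α => 𝕜) 2) : T f y = 0 := by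
  have hsum : HasSum (fun x => T (lp.single 2 x (f x))) (T f) :=
    T.hasSum (lp.hasSum_single ENNReal.ofNat_ne_top f)
  have hterm : ∀ x, T (lp.single 2 x (f x)) y = 0 := fun x => by
    rw [← mul_one (f x), ← smul_eq_mul, lp.single_smul, map_smul, lp.coeFn_smul, Pi.smul_apply,
      hT, smul_zero]
  have hy : HasSum (fun x => T (lp.single 2 x (f x)) y) (T f y) :=
    (lp.evalCLM 𝕜 (fun _ : β => 𝕜) 2 y).hasSum hsum
  simp only [hterm] at hy
  exact hy.unique hasSum_zero

theorem adjoint_apply_of_map_single_one [DecidableEq β]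
    {T : lp (fun _ : α => 𝕜) 2 →L[𝕜] lp (fun _ : β => 𝕜) 2} {σ : α → β}
    (hT : ∀ x, T (lp.single 2 x 1) = lp.single 2 (σ x) 1) (f : lp (fun _ : β => 𝕜) 2) (x : α) :
    T.adjoint f x = f (σ x) := by
  have h := lp.inner_single_left (𝕜 := 𝕜) x (1 : 𝕜) (T.adjoint f)
  rw [ContinuousLinearMap.adjoint_inner_right, hT, lp.inner_single_left] at h
  simpa using h.symm

end lp

section LeftShift

variable {𝕜 P : Type*} [RCLike 𝕜] [Mul P] [DecidableEq P]
  {V : P → (lp (fun _ : P => 𝕜) 2 →L[𝕜] lp (fun _ : P => 𝕜) 2)}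

theorem leftShift_apply_eq_zero (hV : ∀ p x : P, V p (lp.single 2 x 1) = lp.single 2 (p * x) 1)
    {p y : P} (hy : ∀ x, p * x ≠ y) (f : lp (fun _ : P => 𝕜) 2) : V p f y = 0 :=
  lp.map_apply_eq_zero_of_single_one (V p)
    (fun x => by rw [hV]; exact lp.single_apply_ne 2 _ _ (hy x).symm) f

theorem adjoint_leftShift_mul_leftShift_eq_zero
    (hV : ∀ p x : P, V p (lp.single 2 x 1) = lp.single 2 (p * x) 1)
    {p₁ p₂ : P} (hdisj : ∀ a b, p₁ * a ≠ p₂ * b) : (V p₁).adjoint * V p₂ = 0 := by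
  ext f x
  change (V p₁).adjoint (V p₂ f) x = 0
  rw [lp.adjoint_apply_of_map_single_one (hV p₁)]
  exact leftShift_apply_eq_zero hV (fun b => (hdisj x b).symm) f

end LeftShift

theorem stmt_15_general {P : Type*} [Monoid P] [DecidableEq P]
    (V : P → (lp (fun _ : P => ℂ) 2 →L[ℂ] lp (fun _ : P => ℂ) 2))
    (hV : ∀ p x : P, V p (lp.single 2 x (1 : ℂ)) = lp.single 2 (p * x) (1 : ℂ))
    (ι : Type*) (l : Filter ι) (hl : l.NeBot) (ξ : ι → lp (fun _ : P => ℂ) 2)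
    (hconv : ∀ p₁ p₂ : P,
      Filter.Tendsto
        (fun i => (inner ℂ
          (((V p₁ * ContinuousLinearMap.adjoint (V p₁) *
             (V p₂ * ContinuousLinearMap.adjoint (V p₂)))) (ξ i))
          (ξ i) : ℂ))
        l (nhds 1)) :
    ∀ p₁ p₂ : P, ∃ a b : P, p₁ * a = p₂ * b := by
  intro p₁ p₂
  by_contra! hdisj
  have hzero : V p₁ * (V p₁).adjoint * (V p₂ * (V p₂).adjoint) = 0 := by
    rw [mul_assoc, ← mul_assoc (V p₁).adjoint,
      adjoint_leftShift_mul_leftShift_eq_zero hV hdisj, zero_mul, mul_zero]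
  have hlim := hconv p₁ p₂
  simp only [hzero, zero_apply, inner_zero_left] at hlim
  exact one_ne_zero (tendsto_nhds_unique hlim tendsto_const_nhds)

/-- Let `P` be a cancellative monoid and suppose there is a net `(ξ_i)` of
finitely supported unit vectors in `ℓ²(P)` with
`⟨V_{p₁} V_{p₁}* V_{p₂} V_{p₂}* ξ_i, ξ_i⟩ → 1` for all `p₁, p₂ ∈ P`. Then `P` is left
reversible: `p₁P ∩ p₂P ≠ ∅` for all `p₁, p₂`. -/
theorem stmt_15 {P : Type*} [Monoid P] [DecidableEq P]
    (hlcancel : ∀ p x y : P, p * x = p * y → x = y)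
    (hrcancel : ∀ p x y : P, x * p = y * p → x = y)
    (V : P → (lp (fun _ : P => ℂ) 2 →L[ℂ] lp (fun _ : P => ℂ) 2))
    (hV : ∀ p x : P, V p (lp.single 2 x (1 : ℂ)) = lp.single 2 (p * x) (1 : ℂ))
    (ι : Type*) (l : Filter ι) (hl : l.NeBot) (ξ : ι → lp (fun _ : P => ℂ) 2)
    (hξ : ∀ i, ‖ξ i‖ = 1) (hfin : ∀ i, {x : P | ξ i x ≠ 0}.Finite)
    (hconv : ∀ p₁ p₂ : P,
      Filter.Tendsto
        (fun i => (inner ℂ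
          (((V p₁ * ContinuousLinearMap.adjoint (V p₁) *
             (V p₂ * ContinuousLinearMap.adjoint (V p₂)))) (ξ i))
          (ξ i) : ℂ))
        l (nhds 1)) :
    ∀ p₁ p₂ : P, ∃ a b : P, p₁ * a = p₂ * b :=
  stmt_15_general V hV ι l hl ξ hconv
end

section
/- Let P be a left reversible monoid embedded in a group (or more generally, a left cancellative monoid such that every constructible right ideal obtained from P by finitely many operations of left multiplication and preimage under left multiplication is nonempty). Then for all p, q ∈ P and every nonempty right ideal X of P, the set q⁻¹(pX) is nonempty; consequently every set of the form q_m⁻¹ p_m ⋯ q₁⁻¹ p₁ P is nonempty. -/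
/-!
In a left reversible semigroup, if `x ∈ X` then `(p * x) * a = q * b` for some `a, b`, so `b ∈ q⁻¹(pX)`
because `X` is a right ideal. The set `q⁻¹(pX)` is again a right ideal, so nonemptiness
propagates through every constructible set `q_m⁻¹ p_m ⋯ q₁⁻¹ p₁ P`.
-/

section RightIdeal

variable {P : Type*}

def IsRightIdeal [Mul P] (X : Set P) : Prop :=
  ∀ x ∈ X, ∀ r : P, x * r ∈ X

theorem isRightIdeal_univ [Mul P] : IsRightIdeal (Set.univ : Set P) :=
  fun _ _ _ => trivial

variable [Semigroup P]

theorem IsRightIdeal.preimage_mul_left_image_mul_left {X : Set P} (hX : IsRightIdeal X)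
    (p q : P) : IsRightIdeal ((q * ·) ⁻¹' ((p * ·) '' X)) := by
  rintro z ⟨x, hx, hpx⟩ r
  exact ⟨x * r, hX x hx r, by simp only [← mul_assoc, hpx]⟩

theorem IsRightIdeal.nonempty_preimage_mul_left_image_mul_left
    (hrev : ∀ p q : P, ∃ a b : P, p * a = q * b) {X : Set P} (hX : IsRightIdeal X)
    (hne : X.Nonempty) (p q : P) : ((q * ·) ⁻¹' ((p * ·) '' X)).Nonempty := by
  obtain ⟨x, hx⟩ := hne
  obtain ⟨a, b, hab⟩ := hrev (p * x) q
  exact ⟨b, x * a, hX x hx a, by simpa only [mul_assoc] using hab⟩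

theorem IsRightIdeal.nonempty_foldl_preimage_mul_left_image_mul_left
    (hrev : ∀ p q : P, ∃ a b : P, p * a = q * b) {ι : Type*} (p q : ι → P) (l : List ι)
    {X : Set P} (hX : IsRightIdeal X) (hne : X.Nonempty) :
    (l.foldl (fun S i => (q i * ·) ⁻¹' ((p i * ·) '' S)) X).Nonempty := by
  induction l generalizing X with
  | nil => exact hne
  | cons i l ih =>
    exact ih (hX.preimage_mul_left_image_mul_left (p i) (q i))
      (hX.nonempty_preimage_mul_left_image_mul_left hrev hne (p i) (q i))

end RightIdeal

/-- Let `P` be a left reversible monoid (`pP ∩ qP ≠ ∅` for all `p, q`). Then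
for all `p, q ∈ P` and every nonempty right ideal `X ⊆ P`, the set `q⁻¹(pX)` is nonempty;
consequently, every constructible set `q_m⁻¹ p_m ⋯ q₁⁻¹ p₁ P` is nonempty. -/
theorem stmt_18 {P : Type*} [Monoid P]
    (hrev : ∀ p q : P, ∃ a b : P, p * a = q * b) :
    (∀ p q : P, ∀ X : Set P, (∀ x ∈ X, ∀ r : P, x * r ∈ X) → X.Nonempty →
      ((fun z => q * z) ⁻¹' ((fun z => p * z) '' X)).Nonempty) ∧
    (∀ (m : ℕ) (p q : Fin m → P),
      (List.foldl (fun S i => (fun z => q i * z) ⁻¹' ((fun z => p i * z) '' S))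
        (Set.univ : Set P) (List.finRange m)).Nonempty) :=
  ⟨fun p q _ hX hne => IsRightIdeal.nonempty_preimage_mul_left_image_mul_left hrev hX hne p q,
    fun _ p q => isRightIdeal_univ.nonempty_foldl_preimage_mul_left_image_mul_left hrev p q _
      Set.univ_nonempty⟩
end

section
/- Let R be a Dedekind domain and let P_R = R ⋊ R∖{0} be its ax+b-semigroup. Suppose (b+I) × (I∖{0}) = ⋃_{j=1}^n (b_j+I_j) × (I_j∖{0}) where I, I₁, …, I_n are nonzero ideals of R, b, b_j ∈ R, and each (b_j+I_j) × (I_j∖{0}) is a proper subset of (b+I) × (I∖{0}). Then a contradiction arises; i.e., the constructible right ideals of P_R, which are exactly the sets (b+I) × (I∖{0}) for b ∈ R and nonzero ideals I, together with ∅, are independent: such a union equality forces (b_j+I_j) × (I_j∖{0}) = (b+I) × (I∖{0}) for some j. -/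
/-!
A proper subset `(c + J) × (J∖{0})` of `(b + I) × (I∖{0})` with `J ≠ 0` has `J ⊆ I`, and
`J ≠ I` (otherwise `c + I = b + I` and the two sets agree). Projecting a covering onto the second
factor thus covers `I∖{0}` by finitely many ideals `J_j ⊊ I` (a `J_j = 0` contributes the empty
set). Each `J_j ⊊ I` lies in `I * P_j` for a maximal ideal `P_j`, and a Chinese-remainder-type
sum produces an element of `I` outside every `I * P_j`.
-/

noncomputable section

/-- The constructible right ideal `(b+I) × (I∖{0})` of the `ax+b`-semigroup
`P_R = R ⋊ (R∖{0})` over a domain `R`, viewed as a subset of `R × R`. -/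
def axbIdeal {R : Type*} [CommRing R] (b : R) (I : Ideal R) : Set (R × R) :=
  ((fun x => b + x) '' (I : Set R)) ×ˢ {a : R | a ∈ I ∧ a ≠ 0}

namespace Ideal

variable {R : Type*} [CommRing R] [IsDedekindDomain R]

theorem mul_prod_erase_not_le_mul {I : Ideal R} (hI : I ≠ ⊥) {S : Finset (Ideal R)}
    (hS : ∀ P ∈ S, P.IsMaximal) {P : Ideal R} (hP : P ∈ S) :
    ¬I * ∏ Q ∈ S.erase P, Q ≤ I * P := by
  rw [mul_le_mul_iff_right₀ (bot_lt_iff_ne_bot.mpr hI), (hS P hP).isPrime.prod_le]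
  rintro ⟨Q, hQ, hQP⟩
  exact (Finset.mem_erase.mp hQ).1 <|
    (hS Q (Finset.mem_of_mem_erase hQ)).eq_of_le (hS P hP).ne_top hQP

/-- The sum of elements `x_P ∈ I * ∏_{Q ≠ P} Q` with `x_P ∉ I * P` avoids every `I * P`:
all summands but `x_P` lie in `I * P`. -/
theorem exists_mem_forall_notMem_mul_of_isMaximal {I : Ideal R} (hI : I ≠ ⊥)
    (S : Finset (Ideal R)) (hS : ∀ P ∈ S, P.IsMaximal) :
    ∃ x ∈ I, ∀ P ∈ S, x ∉ I * P := by
  have hx : ∀ P ∈ S, ∃ x ∈ I * ∏ Q ∈ S.erase P, Q, x ∉ I * P := fun P hP =>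
    SetLike.not_le_iff_exists.mp (mul_prod_erase_not_le_mul hI hS hP)
  choose! x hxmem hxnot using hx
  refine ⟨∑ P ∈ S, x P, sum_mem _ fun P hP => mul_le_left (hxmem P hP), fun P hP hmem => ?_⟩
  have hrest : ∑ Q ∈ S.erase P, x Q ∈ I * P := by
    refine sum_mem _ fun Q hQ => mul_mono_right ?_ (hxmem Q (Finset.mem_of_mem_erase hQ))
    exact le_of_dvd <| Finset.dvd_prod_of_mem _ <|
      Finset.mem_erase.mpr ⟨(Finset.ne_of_mem_erase hQ).symm, hP⟩
  have := sub_mem hmem hrest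
  rw [← Finset.add_sum_erase S x hP, add_sub_cancel_right] at this
  exact hxnot P hP this

theorem exists_isMaximal_le_mul_of_lt {I J : Ideal R} (hJI : J < I) :
    ∃ P : Ideal R, P.IsMaximal ∧ J ≤ I * P := by
  obtain ⟨C, rfl⟩ := dvd_iff_le.mpr hJI.le
  have hC : C ≠ ⊤ := by
    rintro rfl
    exact hJI.ne (mul_top I)
  obtain ⟨P, hP, hCP⟩ := exists_le_maximal C hC
  exact ⟨P, hP, mul_mono_right hCP⟩

theorem exists_mem_forall_notMem_of_lt {ι : Type*} [Finite ι] {I : Ideal R} (hI : I ≠ ⊥)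
    {J : ι → Ideal R} (hJ : ∀ j, J j < I) : ∃ x ∈ I, ∀ j, x ∉ J j := by
  choose P hP hJP using fun j => exists_isMaximal_le_mul_of_lt (hJ j)
  obtain ⟨x, hxI, hx⟩ := exists_mem_forall_notMem_mul_of_isMaximal hI
    (Set.finite_range P).toFinset (by simpa using hP)
  exact ⟨x, hxI, fun j hj => hx (P j) (by simp) (hJP j hj)⟩

end Ideal

section axbIdeal

variable {R : Type*} [CommRing R]

theorem mem_axbIdeal {b x a : R} {I : Ideal R} :
    (x, a) ∈ axbIdeal b I ↔ x - b ∈ I ∧ a ∈ I ∧ a ≠ 0 := by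
  simp [axbIdeal, neg_add_eq_sub]

theorem mk_mem_axbIdeal_self {b a : R} {I : Ideal R} (ha : a ∈ I) (ha0 : a ≠ 0) :
    (b, a) ∈ axbIdeal b I :=
  mem_axbIdeal.mpr ⟨by rw [sub_self]; exact I.zero_mem, ha, ha0⟩

theorem axbIdeal_eq_of_sub_mem {b c : R} {I : Ideal R} (h : c - b ∈ I) :
    axbIdeal c I = axbIdeal b I := by
  ext ⟨x, a⟩
  rw [mem_axbIdeal, mem_axbIdeal, ← sub_add_sub_cancel x c b, I.add_mem_iff_left h]

theorem sub_mem_and_le_of_axbIdeal_subset {b c : R} {I J : Ideal R} (hJ : J ≠ ⊥)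
    (h : axbIdeal c J ⊆ axbIdeal b I) : c - b ∈ I ∧ J ≤ I := by
  have hmem : ∀ y ∈ J, y ≠ 0 → c - b ∈ I ∧ y ∈ I ∧ y ≠ 0 := fun y hy hy0 =>
    mem_axbIdeal.mp (h (mk_mem_axbIdeal_self hy hy0))
  obtain ⟨a, haJ, ha0⟩ := Submodule.exists_mem_ne_zero_of_ne_bot hJ
  refine ⟨(hmem a haJ ha0).1, fun y hy => ?_⟩
  rcases eq_or_ne y 0 with rfl | hy0
  · exact I.zero_mem
  · exact (hmem y hy hy0).2.1

end axbIdeal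

theorem stmt_19_general {R : Type*} [CommRing R] [IsDedekindDomain R]
    (n : ℕ) (b : R) (I : Ideal R) (hI : I ≠ ⊥)
    (bb : Fin n → R) (II : Fin n → Ideal R)
    (hunion : axbIdeal b I = ⋃ j, axbIdeal (bb j) (II j)) :
    ∃ j, axbIdeal (bb j) (II j) = axbIdeal b I := by
  have hcover : ∀ x ∈ I, x ≠ 0 → ∃ j, x ∈ II j := fun x hx hx0 => by
    have : (b, x) ∈ ⋃ j, axbIdeal (bb j) (II j) :=
      hunion ▸ mk_mem_axbIdeal_self hx hx0
    obtain ⟨j, hj⟩ := Set.mem_iUnion.mp this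
    exact ⟨j, (mem_axbIdeal.mp hj).2.1⟩
  by_contra! hne
  have hlt : ∀ j, II j < I := by
    intro j
    rcases eq_or_ne (II j) ⊥ with hbot | hbot
    · exact hbot ▸ bot_lt_iff_ne_bot.mpr hI
    obtain ⟨hsub, hle⟩ :=
      sub_mem_and_le_of_axbIdeal_subset hbot (hunion ▸ Set.subset_iUnion _ j)
    refine hle.lt_of_ne fun heq => hne j ?_
    rw [heq]
    exact axbIdeal_eq_of_sub_mem hsub
  obtain ⟨x, hxI, hx⟩ := Ideal.exists_mem_forall_notMem_of_lt hI hlt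
  obtain ⟨a, haI, ha0⟩ := Submodule.exists_mem_ne_zero_of_ne_bot hI
  obtain ⟨j, -⟩ := hcover a haI ha0
  have hx0 : x ≠ 0 := by
    rintro rfl
    exact hx j (II j).zero_mem
  obtain ⟨k, hk⟩ := hcover x hxI hx0
  exact hx k hk

/-- Let `R` be a Dedekind domain. The nonempty constructible right ideals
`(b+I) × (I∖{0})` of the `ax+b`-semigroup `P_R = R ⋊ (R∖{0})` are independent: if
`(b+I) × (I∖{0}) = ⋃_j (b_j+I_j) × (I_j∖{0})` for nonzero ideals `I, I_j` and elements
`b, b_j ∈ R`, then `(b_j+I_j) × (I_j∖{0}) = (b+I) × (I∖{0})` for some `j`. -/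
theorem stmt_19 {R : Type*} [CommRing R] [IsDomain R] [IsDedekindDomain R]
    (n : ℕ) (b : R) (I : Ideal R) (hI : I ≠ ⊥)
    (bb : Fin n → R) (II : Fin n → Ideal R) (hII : ∀ j, II j ≠ ⊥)
    (hunion : axbIdeal b I = ⋃ j, axbIdeal (bb j) (II j)) :
    ∃ j, axbIdeal (bb j) (II j) = axbIdeal b I :=
  stmt_19_general n b I hI bb II hunion
end
end
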